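/- arXiv:1706.06164 — 5 statements merged into one kernel-verified Lean document; each statement's English description precedes it below -/
import Mathlib

section
/- Product rule for the truncated V-fractional derivative: if f and g are α-differentiable at t > 0 then f·g is α-differentiable at t and V^α(f·g)(t) = f(t)·V^α g(t) + g(t)·V^α f(t). -/
open Filter Topology

/-- The truncated six-parameter Mittag-Leffler function scaled by `Γ(β)`:
`ᵢH(z) = Γ(β) ∑_{k=0}^{i} ((ρ)_{qk}/(δ)_{pk}) zᵏ / Γ(γk + β)`. -/
noncomputable def iH (i : ℕ) (γ β ρ δ p q : ℝ) (z : ℝ) : ℝ :=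
  Real.Gamma β * ∑ k ∈ Finset.range (i + 1),
    ((Real.Gamma (ρ + q * (k : ℝ)) / Real.Gamma ρ) /
        (Real.Gamma (δ + p * (k : ℝ)) / Real.Gamma δ)) *
      z ^ k / Real.Gamma (γ * (k : ℝ) + β)

/-- `f` has truncated 𝒱-fractional derivative `L` of order `α` at `t`:
`V^α f(t) = lim_{ε→0} (f (t · ᵢH (ε t^{-α})) - f t)/ε`. -/
def HasVDerivAt (i : ℕ) (γ β ρ δ p q α : ℝ) (f : ℝ → ℝ) (t L : ℝ) : Prop :=
  Tendsto (fun ε : ℝ => (f (t * iH i γ β ρ δ p q (ε * t ^ (-α))) - f t) / ε)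
    (𝓝[≠] (0 : ℝ)) (𝓝 L)

/-- Product rule for the truncated 𝒱-fractional derivative. -/
theorem vfrac_mul (i : ℕ) (γ β ρ δ p q α : ℝ)
    (hγ : 0 < γ) (hβ : 0 < β) (hρ : 0 < ρ) (hδ : 0 < δ) (hp : 0 < p) (hq : 0 < q)
    (hpq : q ≤ γ + p) (hα0 : 0 < α) (hα1 : α ≤ 1)
    (f g : ℝ → ℝ) (t : ℝ) (ht : 0 < t) (F G : ℝ)
    (hf : HasVDerivAt i γ β ρ δ p q α f t F)
    (hg : HasVDerivAt i γ β ρ δ p q α g t G) :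
    HasVDerivAt i γ β ρ δ p q α (fun x => f x * g x) t (f t * G + g t * F) := by
  unfold HasVDerivAt at *
  set u : ℝ → ℝ := fun ε => t * iH i γ β ρ δ p q (ε * t ^ (-α)) with hu
  have hε : Tendsto (fun ε : ℝ => ε) (𝓝[≠] (0:ℝ)) (𝓝 0) :=
    tendsto_id.mono_left nhdsWithin_le_nhds
  have hfu : Tendsto (fun ε => f (u ε)) (𝓝[≠] (0:ℝ)) (𝓝 (f t)) := by
    have h1 : Tendsto (fun ε => (f (u ε) - f t) / ε * ε + f t) (𝓝[≠] (0:ℝ))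
        (𝓝 (F * 0 + f t)) := ((hf.mul hε).add tendsto_const_nhds)
    rw [mul_zero, zero_add] at h1
    refine h1.congr' ?_
    filter_upwards [self_mem_nhdsWithin] with ε hε0
    have hne : (ε:ℝ) ≠ 0 := hε0
    field_simp
    ring
  have key : Tendsto (fun ε => f (u ε) * ((g (u ε) - g t) / ε) +
      g t * ((f (u ε) - f t) / ε)) (𝓝[≠] (0:ℝ)) (𝓝 (f t * G + g t * F)) :=
    (hfu.mul hg).add (tendsto_const_nhds.mul hf)
  refine key.congr' ?_
  filter_upwards [self_mem_nhdsWithin] with ε hε0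
  have : (ε:ℝ) ≠ 0 := hε0
  field_simp
  ring
end

section
/- Quotient rule: if f and g are α-differentiable at t > 0 and g(t) ≠ 0, then f/g is α-differentiable at t and V^α(f/g)(t) = [g(t)·V^α f(t) − f(t)·V^α g(t)] / g(t)². -/
open Filter Topology

/-- Quotient rule for the truncated 𝒱-fractional derivative. -/
theorem vfrac_div (i : ℕ) (γ β ρ δ p q α : ℝ)
    (hγ : 0 < γ) (hβ : 0 < β) (hρ : 0 < ρ) (hδ : 0 < δ) (hp : 0 < p) (hq : 0 < q)
    (hpq : q ≤ γ + p) (hα0 : 0 < α) (hα1 : α ≤ 1)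
    (f g : ℝ → ℝ) (t : ℝ) (ht : 0 < t) (F G : ℝ) (hgt : g t ≠ 0)
    (hf : HasVDerivAt i γ β ρ δ p q α f t F)
    (hg : HasVDerivAt i γ β ρ δ p q α g t G) :
    HasVDerivAt i γ β ρ δ p q α (fun x => f x / g x) t
      ((g t * F - f t * G) / (g t) ^ 2) := by
  unfold HasVDerivAt at *
  set P : ℝ → ℝ := fun ε => t * iH i γ β ρ δ p q (ε * t ^ (-α)) with hP
  have hε0 : Tendsto (fun ε : ℝ => ε) (𝓝[≠] (0:ℝ)) (𝓝 0) :=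
    tendsto_id.mono_left nhdsWithin_le_nhds
  have hgP : Tendsto (fun ε => g (P ε)) (𝓝[≠] (0:ℝ)) (𝓝 (g t)) := by
    have h := hg.mul hε0
    simp only [mul_zero] at h
    have h2 : Tendsto (fun ε => (g (P ε) - g t) / ε * ε + g t) (𝓝[≠] (0:ℝ)) (𝓝 (0 + g t)) :=
      h.add tendsto_const_nhds
    rw [zero_add] at h2
    refine h2.congr' ?_
    filter_upwards [self_mem_nhdsWithin] with ε hε
    have hε' : ε ≠ 0 := hε
    rw [div_mul_cancel₀ _ hε', sub_add_cancel]
  have hne : ∀ᶠ ε in 𝓝[≠] (0:ℝ), g (P ε) ≠ 0 := hgP.eventually_ne hgt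
  have main : Tendsto (fun ε => ((f (P ε) - f t) / ε * g t - f t * ((g (P ε) - g t) / ε))
      / (g (P ε) * g t)) (𝓝[≠] (0:ℝ)) (𝓝 ((F * g t - f t * G) / (g t * g t))) :=
    ((hf.mul_const (g t)).sub (tendsto_const_nhds.mul hg)).div (hgP.mul tendsto_const_nhds)
      (mul_ne_zero hgt hgt)
  have goal : Tendsto (fun ε => (f (P ε) / g (P ε) - f t / g t) / ε) (𝓝[≠] (0:ℝ))
      (𝓝 ((F * g t - f t * G) / (g t * g t))) := by
    refine main.congr' ?_
    filter_upwards [hne, self_mem_nhdsWithin] with ε h1 h2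
    have hε' : ε ≠ 0 := h2
    rw [div_sub_div _ _ h1 hgt, div_div, div_mul_eq_mul_div, mul_div_assoc', ← sub_div, div_div,
      div_eq_div_iff (mul_ne_zero hε' (mul_ne_zero h1 hgt)) (mul_ne_zero (mul_ne_zero h1 hgt) hε')]
    ring
  convert goal using 2
  field_simp
end

section
/- Chain rule: if g : (0,∞) → ℝ is α-differentiable at t > 0 and f is differentiable at g(t), then f ∘ g is α-differentiable at t and V^α(f ∘ g)(t) = f′(g(t)) · V^α g(t). -/
open Filter Topology

/-- Chain rule: if `g` is α-differentiable at `t > 0` and `f` is differentiable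
at `g t`, then `V^α (f ∘ g)(t) = f'(g t) · V^α g(t)`. -/
theorem vfrac_chain (i : ℕ) (γ β ρ δ p q α : ℝ)
    (hγ : 0 < γ) (hβ : 0 < β) (hρ : 0 < ρ) (hδ : 0 < δ) (hp : 0 < p) (hq : 0 < q)
    (hpq : q ≤ γ + p) (hα0 : 0 < α) (hα1 : α ≤ 1)
    (f g : ℝ → ℝ) (t : ℝ) (ht : 0 < t) (G f' : ℝ)
    (hg : HasVDerivAt i γ β ρ δ p q α g t G)
    (hf : HasDerivAt f f' (g t)) :
    HasVDerivAt i γ β ρ δ p q α (f ∘ g) t (f' * G) := by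
  set x := g t with hx
  set u : ℝ → ℝ := fun ε => g (t * iH i γ β ρ δ p q (ε * t ^ (-α))) with hu
  have hq' : Tendsto (fun ε => (u ε - x) / ε) (𝓝[≠] (0:ℝ)) (𝓝 G) := hg
  have hε : Tendsto (fun ε : ℝ => ε) (𝓝[≠] (0:ℝ)) (𝓝 0) :=
    tendsto_id.mono_left nhdsWithin_le_nhds
  have hu0 : Tendsto u (𝓝[≠] (0:ℝ)) (𝓝 x) := by
    have h1 : Tendsto (fun ε => (u ε - x) / ε * ε + x) (𝓝[≠] (0:ℝ)) (𝓝 (G * 0 + x)) :=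
      (hq'.mul hε).add tendsto_const_nhds
    rw [mul_zero, zero_add] at h1
    refine h1.congr' ?_
    filter_upwards [self_mem_nhdsWithin] with ε hε0
    have : (ε : ℝ) ≠ 0 := hε0
    field_simp
    ring
  set φ : ℝ → ℝ := fun y => if y = x then f' else (f y - f x) / (y - x) with hφdef
  have hφ : ∀ y, f y - f x = φ y * (y - x) := by
    intro y
    by_cases hy : y = x
    · simp [hφdef, hy]
    · have : y - x ≠ 0 := sub_ne_zero.mpr hy
      simp only [hφdef, if_neg hy]
      field_simp
  have hφt : Tendsto φ (𝓝 x) (𝓝 f') := by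
    rw [← nhdsNE_sup_pure x, tendsto_sup]
    constructor
    · have hs : Tendsto (slope f x) (𝓝[≠] x) (𝓝 f') :=
        hasDerivAt_iff_tendsto_slope.mp hf
      refine hs.congr' ?_
      filter_upwards [self_mem_nhdsWithin] with y hy
      simp only [hφdef, if_neg (by simpa using hy), slope_def_field]
    · have : φ x = f' := by simp [hφdef]
      simpa [this] using tendsto_pure_nhds φ x
  have key : Tendsto (fun ε => φ (u ε) * ((u ε - x) / ε)) (𝓝[≠] (0:ℝ)) (𝓝 (f' * G)) :=
    (hφt.comp hu0).mul hq'
  refine key.congr ?_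
  intro ε
  show φ (u ε) * ((u ε - x) / ε) = ((f ∘ g) (t * iH i γ β ρ δ p q (ε * t ^ (-α))) - (f ∘ g) t) / ε
  simp only [Function.comp_apply, ← hx, ← hu]
  rw [hφ (u ε)]
  ring
end

section
/- Product rule in ℝⁿ: if real-valued functions f, g : ℝⁿ → ℝ are α-differentiable at a = (a₁, …, aₙ) with each aᵢ > 0, then f·g is α-differentiable at a and 𝕍^α(f·g)(a) = f(a)·𝕍^α g(a) + g(a)·𝕍^α f(a). -/
open Filter Topology

/-- Multivariable truncated 𝒱-fractional derivative: the linear map `L` is the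
derivative of `f` of order `α` at `a`. -/
def HasVFDerivAt (i : ℕ) (γ β ρ δ p q α : ℝ) {n : ℕ} {E : Type*}
    [NormedAddCommGroup E] [NormedSpace ℝ E]
    (f : (Fin n → ℝ) → E) (a : Fin n → ℝ) (L : (Fin n → ℝ) →ₗ[ℝ] E) : Prop :=
  Tendsto (fun ε : Fin n → ℝ =>
      ‖f (fun j => a j * iH i γ β ρ δ p q (ε j * a j ^ (-α))) - f a - L ε‖ / ‖ε‖)
    (𝓝[≠] (0 : Fin n → ℝ)) (𝓝 (0 : ℝ))

lemma abs_add6 (x1 x2 x3 x4 x5 x6 : ℝ) :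
    |x1 + x2 + x3 + x4 + x5 + x6| ≤ |x1| + |x2| + |x3| + |x4| + |x5| + |x6| := by
  have h1 := abs_add_le (x1 + x2 + x3 + x4 + x5) x6
  have h2 := abs_add_le (x1 + x2 + x3 + x4) x5
  have h3 := abs_add_le (x1 + x2 + x3) x4
  have h4 := abs_add_three x1 x2 x3
  linarith

/-- Product rule for the multivariable truncated 𝒱-fractional derivative of
real-valued functions on `ℝⁿ`. -/
theorem vffrac_mul (i : ℕ) (γ β ρ δ p q α : ℝ)
    (hγ : 0 < γ) (hβ : 0 < β) (hρ : 0 < ρ) (hδ : 0 < δ) (hp : 0 < p) (hq : 0 < q)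
    (hpq : q ≤ γ + p) (hα0 : 0 < α) (hα1 : α ≤ 1)
    {n : ℕ} (f g : (Fin n → ℝ) → ℝ) (a : Fin n → ℝ) (ha : ∀ j, 0 < a j)
    (L M : (Fin n → ℝ) →ₗ[ℝ] ℝ)
    (hf : HasVFDerivAt i γ β ρ δ p q α f a L)
    (hg : HasVFDerivAt i γ β ρ δ p q α g a M) :
    HasVFDerivAt i γ β ρ δ p q α (fun x => f x * g x) a
      (f a • M + g a • L) := by
  classical
  unfold HasVFDerivAt at hf hg ⊢
  set φ : (Fin n → ℝ) → (Fin n → ℝ) :=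
    fun ε => fun j => a j * iH i γ β ρ δ p q (ε j * a j ^ (-α)) with hφ
  set Df : (Fin n → ℝ) → ℝ := fun ε => f (φ ε) - f a - L ε with hDfdef
  set Dg : (Fin n → ℝ) → ℝ := fun ε => g (φ ε) - g a - M ε with hDgdef
  have hfa : Tendsto (fun ε => |Df ε| / ‖ε‖) (𝓝[≠] (0 : Fin n → ℝ)) (𝓝 0) := by
    simpa [Real.norm_eq_abs] using hf
  have hga : Tendsto (fun ε => |Dg ε| / ‖ε‖) (𝓝[≠] (0 : Fin n → ℝ)) (𝓝 0) := by
    simpa [Real.norm_eq_abs] using hg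
  set L' := LinearMap.toContinuousLinearMap L with hL'
  set M' := LinearMap.toContinuousLinearMap M with hM'
  have hnorm : Tendsto (fun ε : Fin n → ℝ => ‖ε‖) (𝓝[≠] (0 : Fin n → ℝ)) (𝓝 0) :=
    tendsto_norm_zero.mono_left nhdsWithin_le_nhds
  have hne : ∀ᶠ ε in 𝓝[≠] (0 : Fin n → ℝ), ε ≠ 0 := eventually_mem_nhdsWithin
  have hDf0 : Tendsto (fun ε => |Df ε|) (𝓝[≠] (0 : Fin n → ℝ)) (𝓝 0) := by
    have h := hfa.mul hnorm
    rw [zero_mul] at h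
    refine h.congr' ?_
    filter_upwards [hne] with ε hε
    rw [div_mul_cancel₀ _ (norm_ne_zero_iff.mpr hε)]
  have hDg0 : Tendsto (fun ε => |Dg ε|) (𝓝[≠] (0 : Fin n → ℝ)) (𝓝 0) := by
    have h := hga.mul hnorm
    rw [zero_mul] at h
    refine h.congr' ?_
    filter_upwards [hne] with ε hε
    rw [div_mul_cancel₀ _ (norm_ne_zero_iff.mpr hε)]
  have hM0 : Tendsto (fun ε => |M ε|) (𝓝[≠] (0 : Fin n → ℝ)) (𝓝 0) := by
    have hc : Continuous fun ε : Fin n → ℝ => |M ε| :=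
      (M'.continuous.abs)
    have : Tendsto (fun ε : Fin n → ℝ => |M ε|) (𝓝[≠] (0 : Fin n → ℝ)) (𝓝 |M 0|) :=
      (hc.tendsto (0 : Fin n → ℝ)).mono_left nhdsWithin_le_nhds
    simpa using this
  set B : (Fin n → ℝ) → ℝ := fun ε =>
    |f a| * (|Dg ε| / ‖ε‖) + |g a| * (|Df ε| / ‖ε‖) + ‖L'‖ * |M ε| +
      ‖L'‖ * |Dg ε| + ‖M'‖ * |Df ε| + |Df ε| * (|Dg ε| / ‖ε‖) with hB
  have hBt : Tendsto B (𝓝[≠] (0 : Fin n → ℝ)) (𝓝 0) := by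
    have : Tendsto B (𝓝[≠] (0 : Fin n → ℝ))
        (𝓝 (|f a| * 0 + |g a| * 0 + ‖L'‖ * 0 + ‖L'‖ * 0 + ‖M'‖ * 0 + 0 * 0)) := by
      exact (((((hga.const_mul _).add (hfa.const_mul _)).add (hM0.const_mul _)).add
        (hDg0.const_mul _)).add (hDf0.const_mul _)).add (hDf0.mul hga)
    simpa using this
  refine squeeze_zero' ?_ ?_ hBt
  · filter_upwards with ε
    positivity
  · filter_upwards [hne] with ε hε
    have hεn : (0:ℝ) < ‖ε‖ := norm_pos_iff.mpr hε
    have hid : f (φ ε) * g (φ ε) - f a * g a - (f a • M + g a • L) ε =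
        f a * Dg ε + g a * Df ε + L ε * M ε + L ε * Dg ε + M ε * Df ε + Df ε * Dg ε := by
      simp only [LinearMap.add_apply, LinearMap.smul_apply, smul_eq_mul, hDfdef, hDgdef]
      ring
    have hLb : |L ε| ≤ ‖L'‖ * ‖ε‖ := L'.le_opNorm ε
    have hMb : |M ε| ≤ ‖M'‖ * ‖ε‖ := M'.le_opNorm ε
    calc ‖f (φ ε) * g (φ ε) - f a * g a - (f a • M + g a • L) ε‖ / ‖ε‖
        = |f a * Dg ε + g a * Df ε + L ε * M ε + L ε * Dg ε + M ε * Df ε + Df ε * Dg ε| / ‖ε‖ := by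
          rw [Real.norm_eq_abs, hid]
      _ ≤ (|f a| * |Dg ε| + |g a| * |Df ε| + (‖L'‖ * ‖ε‖) * |M ε| +
            (‖L'‖ * ‖ε‖) * |Dg ε| + (‖M'‖ * ‖ε‖) * |Df ε| + |Df ε| * |Dg ε|) / ‖ε‖ := by
          gcongr
          calc |f a * Dg ε + g a * Df ε + L ε * M ε + L ε * Dg ε + M ε * Df ε + Df ε * Dg ε|
              ≤ |f a * Dg ε| + |g a * Df ε| + |L ε * M ε| + |L ε * Dg ε| + |M ε * Df ε| +
                |Df ε * Dg ε| := by
                exact abs_add6 _ _ _ _ _ _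
            _ ≤ _ := by
                simp only [abs_mul]
                gcongr <;> first | exact hLb | exact hMb | positivity
      _ = B ε := by
          rw [hB]
          field_simp
end

section
/- Chain rule in ℝⁿ: if f : ℝⁿ → ℝᵐ is α-differentiable at a = (a₁, …, aₙ) with each aᵢ > 0 and each fᵢ(a) > 0, and g : ℝᵐ → ℝᵖ is (classically Fréchet) differentiable at f(a) and α-differentiable at f(a), then g ∘ f is α-differentiable at a and 𝕍^α(g ∘ f)(a) = Dg(f(a)) ∘ 𝕍^α f(a), where Dg denotes the usual derivative of g. -/
open Filter Topology

theorem littleO_iff_tendsto_div {α : Type*} {E F : Type*} [NormedAddCommGroup E]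
    [NormedAddCommGroup F] {l : Filter α} {X : α → E} {Y : α → F}
    (h : ∀ᶠ x in l, Y x ≠ 0) :
    Asymptotics.IsLittleO l X Y ↔ Tendsto (fun x => ‖X x‖ / ‖Y x‖) l (𝓝 0) := by
  rw [← Asymptotics.isLittleO_norm_norm]
  exact Asymptotics.isLittleO_iff_tendsto'
    (h.mono fun x hx h0 => absurd (norm_eq_zero.mp h0) hx)

/-- Chain rule in `ℝⁿ`: `𝕍^α (g ∘ f)(a) = Dg(f a) ∘ 𝕍^α f(a)`. -/
theorem vffrac_chain (i : ℕ) (γ β ρ δ p q α : ℝ)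
    (hγ : 0 < γ) (hβ : 0 < β) (hρ : 0 < ρ) (hδ : 0 < δ) (hp : 0 < p) (hq : 0 < q)
    (hpq : q ≤ γ + p) (hα0 : 0 < α) (hα1 : α ≤ 1)
    {n m r : ℕ} (f : (Fin n → ℝ) → (Fin m → ℝ)) (g : (Fin m → ℝ) → (Fin r → ℝ))
    (a : Fin n → ℝ) (ha : ∀ j, 0 < a j) (hfa : ∀ j, 0 < f a j)
    (L : (Fin n → ℝ) →ₗ[ℝ] (Fin m → ℝ))
    (hf : HasVFDerivAt i γ β ρ δ p q α f a L)
    (Dg : (Fin m → ℝ) →L[ℝ] (Fin r → ℝ))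
    (hg : HasFDerivAt g Dg (f a))
    (hVg : ∃ M : (Fin m → ℝ) →ₗ[ℝ] (Fin r → ℝ),
      HasVFDerivAt i γ β ρ δ p q α g (f a) M) :
    HasVFDerivAt i γ β ρ δ p q α (fun x => g (f x)) a
      (Dg.toLinearMap.comp L) := by
  set l : Filter (Fin n → ℝ) := 𝓝[≠] (0 : Fin n → ℝ) with hl
  set φ : (Fin n → ℝ) → (Fin n → ℝ) :=
    fun ε => (fun j => a j * iH i γ β ρ δ p q (ε j * a j ^ (-α))) with hφ
  have hne : ∀ᶠ ε : Fin n → ℝ in l, ε ≠ 0 := self_mem_nhdsWithin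
  have hf' : (fun ε => f (φ ε) - f a - L ε) =o[l] (fun ε => ε) :=
    (littleO_iff_tendsto_div hne).mpr hf
  have htε : Tendsto (fun ε : Fin n → ℝ => ε) l (𝓝 0) :=
    tendsto_id.mono_left nhdsWithin_le_nhds
  have hL0 : Tendsto (fun ε => L ε) l (𝓝 0) := by
    have := (L.continuous_of_finiteDimensional.tendsto 0).comp htε
    simpa [Function.comp_def] using this
  have hF : Tendsto (fun ε => f (φ ε)) l (𝓝 (f a)) := by
    have hεn : Tendsto (fun ε : Fin n → ℝ => ‖ε‖) l (𝓝 0) := by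
      simpa [Function.comp_def] using (continuous_norm.tendsto (0 : Fin n → ℝ)).comp htε
    have h1 : Tendsto (fun ε => f (φ ε) - f a - L ε) l (𝓝 0) :=
      tendsto_zero_iff_norm_tendsto_zero.2 (hf'.norm_norm.tendsto_zero_of_tendsto hεn)
    have h2 : Tendsto (fun ε => f (φ ε) - f a - L ε + L ε + f a) l (𝓝 (0 + 0 + f a)) :=
      (h1.add hL0).add tendsto_const_nhds
    have h3 := h2.congr (fun ε => by abel)
    simpa using h3
  have hgO : (fun ε => f (φ ε) - f a) =O[l] (fun ε => ε) := by
    have hLO : (fun ε : Fin n → ℝ => L ε) =O[l] (fun ε => ε) :=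
      (LinearMap.toContinuousLinearMap L).isBigO_comp (fun ε => ε) l
    exact (hf'.isBigO.add hLO).congr (fun ε => by abel) (fun ε => rfl)
  have hg1 : (fun ε => g (f (φ ε)) - g (f a) - Dg (f (φ ε) - f a)) =o[l]
      (fun ε => f (φ ε) - f a) := hg.isLittleO.comp_tendsto hF
  have h1 : (fun ε => g (f (φ ε)) - g (f a) - Dg (f (φ ε) - f a)) =o[l]
      (fun ε => ε) := hg1.trans_isBigO hgO
  have h2 : (fun ε => Dg (f (φ ε) - f a - L ε)) =o[l] (fun ε => ε) :=
    (Dg.isBigO_comp _ l).trans_isLittleO hf'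
  have hfin : (fun ε => g (f (φ ε)) - g (f a) - Dg (L ε)) =o[l] (fun ε => ε) := by
    have := h1.add h2
    refine this.congr (fun ε => ?_) (fun ε => rfl)
    simp only [map_sub]
    abel
  exact (littleO_iff_tendsto_div hne).mp hfin
end
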